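/- Let Q be a symmetric real N×N matrix, S a symmetric real K×K matrix, C a real K×N matrix, U a real N×K matrix, and V = U S. Then trace(S U^T Q U + 2 C U) = trace(𝓛 W_U), where 𝓛 is the (2N+K)×(2N+K) symmetric block matrix with blocks 𝓛 = [[0, C, 0], [C^T, 0, (1/2)Q], [0, (1/2)Q, 0]] and W_U is the (2N+K)×(2N+K) block matrix W_U = [[I_K, U^T, V^T], [U, U U^T, U V^T], [V, V U^T, V V^T]]. -/

import Mathlib

open Matrix

/-- The `(2N+K) × (2N+K)` block matrix `𝓛 = [[0, C, 0], [Cᵀ, 0, ½Q], [0, ½Q, 0]]`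
with block sizes `K, N, N`. -/
noncomputable def Lmat {N K : ℕ} (Q : Matrix (Fin N) (Fin N) ℝ)
    (C : Matrix (Fin K) (Fin N) ℝ) :
    Matrix (Fin K ⊕ (Fin N ⊕ Fin N)) (Fin K ⊕ (Fin N ⊕ Fin N)) ℝ :=
  Matrix.fromBlocks 0 (Matrix.fromCols C 0) (Matrix.fromRows Cᵀ 0)
    (Matrix.fromBlocks 0 ((1 / 2 : ℝ) • Q) ((1 / 2 : ℝ) • Q) 0)

/-- The `(2N+K) × (2N+K)` block matrix
`W_U = [[I_K, Uᵀ, Vᵀ], [U, UUᵀ, UVᵀ], [V, VUᵀ, VVᵀ]]` with block sizes `K, N, N`. -/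
noncomputable def Wmat {N K : ℕ} (U V : Matrix (Fin N) (Fin K) ℝ) :
    Matrix (Fin K ⊕ (Fin N ⊕ Fin N)) (Fin K ⊕ (Fin N ⊕ Fin N)) ℝ :=
  Matrix.fromBlocks 1 (Matrix.fromCols Uᵀ Vᵀ) (Matrix.fromRows U V)
    (Matrix.fromBlocks (U * Uᵀ) (U * Vᵀ) (V * Uᵀ) (V * Vᵀ))

/-!
Only the diagonal blocks of `𝓛 W_U` contribute to its trace; they are `C U`,
`Cᵀ Uᵀ + ½ Q V Uᵀ` and `½ Q U Vᵀ`. Transposition gives `tr (Cᵀ Uᵀ) = tr (C U)`, and with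
`V = U S`, `Sᵀ = S` both `tr (Q V Uᵀ)` and `tr (Q U Vᵀ)` equal `tr (Q U S Uᵀ) = tr (S Uᵀ Q U)`
by cyclicity of the trace.
-/

theorem Matrix.trace_fromBlocks {l m R : Type*} [Fintype l] [Fintype m] [AddCommMonoid R]
    (A : Matrix l l R) (B : Matrix l m R) (C : Matrix m l R) (D : Matrix m m R) :
    (fromBlocks A B C D).trace = A.trace + D.trace :=
  Fintype.sum_sum_type _

theorem Matrix.trace_mul_mul_mul_cycle {l m n p R : Type*} [Fintype l] [Fintype m] [Fintype n]
    [Fintype p] [CommSemiring R] (A : Matrix l m R) (B : Matrix m n R) (C : Matrix n p R)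
    (D : Matrix p l R) :
    (A * (B * C * D)).trace = (C * D * A * B).trace := by
  rw [← Matrix.mul_assoc, ← Matrix.mul_assoc, trace_mul_cycle, trace_mul_cycle]
  simp only [Matrix.mul_assoc]

theorem trace_Lmat_mul_Wmat {N K : ℕ} (Q : Matrix (Fin N) (Fin N) ℝ)
    (C : Matrix (Fin K) (Fin N) ℝ) (U V : Matrix (Fin N) (Fin K) ℝ) :
    (Lmat Q C * Wmat U V).trace =
      2 * (C * U).trace + (Q * (V * Uᵀ)).trace / 2 + (Q * (U * Vᵀ)).trace / 2 := by
  simp only [Lmat, Wmat, fromBlocks_multiply, fromCols_mul_fromRows, fromRows_mul_fromCols,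
    trace_fromBlocks, trace_add, trace_smul, Matrix.zero_mul, Matrix.mul_one, Matrix.smul_mul,
    trace_zero, zero_add, add_zero, smul_eq_mul]
  rw [trace_mul_comm Cᵀ, ← transpose_mul, trace_transpose]
  ring

theorem stmt_6_general (N K : ℕ) (Q : Matrix (Fin N) (Fin N) ℝ)
    (S : Matrix (Fin K) (Fin K) ℝ) (hS : S.IsSymm)
    (C : Matrix (Fin K) (Fin N) ℝ) (U : Matrix (Fin N) (Fin K) ℝ)
    (V : Matrix (Fin N) (Fin K) ℝ) (hV : V = U * S) :
    Matrix.trace (S * Uᵀ * Q * U + (2 : ℝ) • (C * U)) =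
      Matrix.trace (Lmat Q C * Wmat U V) := by
  rw [trace_Lmat_mul_Wmat, hV, transpose_mul, hS.eq, ← Matrix.mul_assoc U S,
    trace_mul_mul_mul_cycle, trace_add, trace_smul, smul_eq_mul]
  ring

/-- for symmetric `Q`, symmetric `S`, any `C`, any `U`, and `V = U S`,
`trace(S Uᵀ Q U + 2 C U) = trace(𝓛 W_U)`. -/
theorem stmt_6 (N K : ℕ) (Q : Matrix (Fin N) (Fin N) ℝ) (hQ : Q.IsSymm)
    (S : Matrix (Fin K) (Fin K) ℝ) (hS : S.IsSymm)
    (C : Matrix (Fin K) (Fin N) ℝ) (U : Matrix (Fin N) (Fin K) ℝ)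
    (V : Matrix (Fin N) (Fin K) ℝ) (hV : V = U * S) :
    Matrix.trace (S * Uᵀ * Q * U + (2 : ℝ) • (C * U)) =
      Matrix.trace (Lmat Q C * Wmat U V) :=
  stmt_6_general N K Q S hS C U V hV
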